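/- arXiv:2310.00502 — 2 statements merged into one kernel-verified Lean document; each statement's English description precedes it below -/
import Mathlib

section
/- Let F : C → D be a semifunctor. Then F is semifully faithful if and only if F is both separable and naturally semifull. -/
open CategoryTheory

universe v₁ v₂ v₃ v₄ u₁ u₂ u₃ u₄

/-- A semifunctor between categories: it preserves composition of morphisms
but not necessarily identities. -/
structure Semifunctor (C : Type u₁) (D : Type u₂) [Category.{v₁} C] [Category.{v₂} D] where
  obj : C → D
  map : ∀ {X Y : C}, (X ⟶ Y) → (obj X ⟶ obj Y)
  map_comp : ∀ {X Y Z : C} (f : X ⟶ Y) (g : Y ⟶ Z), map (f ≫ g) = map f ≫ map g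

namespace Semifunctor

variable {C : Type u₁} {D : Type u₂} {E : Type u₃} {C' : Type u₄}
variable [Category.{v₁} C] [Category.{v₂} D] [Category.{v₃} E] [Category.{v₄} C']

/-- Composition of semifunctors, in diagrammatic order: `F.comp G = G ∘ F`. -/
def comp (F : Semifunctor C D) (G : Semifunctor D E) : Semifunctor C E where
  obj X := G.obj (F.obj X)
  map f := G.map (F.map f)
  map_comp f g := by
    show G.map (F.map (f ≫ g)) = G.map (F.map f) ≫ G.map (F.map g)
    rw [F.map_comp, G.map_comp]

/-- `α` is a natural transformation between the semifunctors `F` and `F'`: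
`α_Y ∘ F(f) = F'(f) ∘ α_X` for every `f : X ⟶ Y`. -/
def IsNatural {F F' : Semifunctor C D} (α : ∀ X : C, F.obj X ⟶ F'.obj X) : Prop :=
  ∀ ⦃X Y : C⦄ (f : X ⟶ Y), F.map f ≫ α Y = α X ≫ F'.map f

/-- `α` is a seminatural transformation: natural and `α_X ∘ F(Id_X) = α_X`. -/
def IsSeminatural {F F' : Semifunctor C D} (α : ∀ X : C, F.obj X ⟶ F'.obj X) : Prop :=
  IsNatural α ∧ ∀ X : C, F.map (𝟙 X) ≫ α X = α X

/-- A semifunctor is faithful if all its hom-maps are injective. -/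
def Faithful (F : Semifunctor C D) : Prop :=
  ∀ ⦃X Y : C⦄ (f g : X ⟶ Y), F.map f = F.map g → f = g

/-- A semifunctor is full if all its hom-maps are surjective. -/
def Full (F : Semifunctor C D) : Prop :=
  ∀ ⦃X Y : C⦄ (g : F.obj X ⟶ F.obj Y), ∃ f : X ⟶ Y, F.map f = g

/-- A semifunctor is semifull if for every `f : FX ⟶ FY` there is `g : X ⟶ Y`
with `F(g) = F(Id_Y) ∘ f ∘ F(Id_X)`. -/
def Semifull (F : Semifunctor C D) : Prop :=
  ∀ ⦃X Y : C⦄ (f : F.obj X ⟶ F.obj Y), ∃ g : X ⟶ Y,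
    F.map g = F.map (𝟙 X) ≫ f ≫ F.map (𝟙 Y)

/-- A semifunctor is semifully faithful if it is faithful and semifull. -/
def SemifullyFaithful (F : Semifunctor C D) : Prop :=
  F.Faithful ∧ F.Semifull

/-- `P` is a natural transformation `Hom_D(F-,F-) → Hom_C(-,-)`. -/
def IsHomNatural (F : Semifunctor C D)
    (P : ∀ X Y : C, (F.obj X ⟶ F.obj Y) → (X ⟶ Y)) : Prop :=
  ∀ (X Y Z T : C) (h : X ⟶ Y) (k : F.obj Y ⟶ F.obj Z) (l : Z ⟶ T),
    P X T (F.map h ≫ k ≫ F.map l) = h ≫ P Y Z k ≫ l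

/-- A semifunctor is separable if the associated natural transformation `ℱ` has a
natural retraction `P` : `P(F(f)) = f`. -/
def Separable (F : Semifunctor C D) : Prop :=
  ∃ P : ∀ X Y : C, (F.obj X ⟶ F.obj Y) → (X ⟶ Y),
    F.IsHomNatural P ∧ ∀ (X Y : C) (f : X ⟶ Y), P X Y (F.map f) = f

/-- A semifunctor is naturally semifull if there is a natural `P` with
`F(P(f)) = F(Id_Y) ∘ f ∘ F(Id_X)` for all `f : FX ⟶ FY`. -/
def NaturallySemifull (F : Semifunctor C D) : Prop :=
  ∃ P : ∀ X Y : C, (F.obj X ⟶ F.obj Y) → (X ⟶ Y),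
    F.IsHomNatural P ∧
    ∀ (X Y : C) (f : F.obj X ⟶ F.obj Y),
      F.map (P X Y f) = F.map (𝟙 X) ≫ f ≫ F.map (𝟙 Y)

/-- A semifunctor is semiseparable if there is a natural `P` with
`F(P(F(f))) = F(f)` for all `f : X ⟶ Y`. -/
def Semiseparable (F : Semifunctor C D) : Prop :=
  ∃ P : ∀ X Y : C, (F.obj X ⟶ F.obj Y) → (X ⟶ Y),
    F.IsHomNatural P ∧
    ∀ (X Y : C) (f : X ⟶ Y), F.map (P X Y (F.map f)) = F.map f

/-- `f : FC ⟶ F'C'` is an `(F_C, F'_{C'})`-semisplit-mono. -/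
def IsSemisplitMonoAt (F : Semifunctor C D) (F' : Semifunctor C' D) (c : C) (c' : C')
    (f : F.obj c ⟶ F'.obj c') : Prop :=
  F.map (𝟙 c) ≫ f = f ∧ ∃ g : F'.obj c' ⟶ F.obj c,
    f ≫ g = F.map (𝟙 c) ∧ F'.map (𝟙 c') ≫ g = g

/-- `f : FC ⟶ F'C'` is an `(F_C, F'_{C'})`-semisplit-epi. -/
def IsSemisplitEpiAt (F : Semifunctor C D) (F' : Semifunctor C' D) (c : C) (c' : C')
    (f : F.obj c ⟶ F'.obj c') : Prop :=
  f ≫ F'.map (𝟙 c') = f ∧ ∃ g : F'.obj c' ⟶ F.obj c,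
    g ≫ f = F'.map (𝟙 c') ∧ g ≫ F.map (𝟙 c) = g

/-- `f : FC ⟶ F'C'` is an `(F_C, F'_{C'})`-semi-isomorphism. -/
def IsSemiIsoAt (F : Semifunctor C D) (F' : Semifunctor C' D) (c : C) (c' : C')
    (f : F.obj c ⟶ F'.obj c') : Prop :=
  F.map (𝟙 c) ≫ f = f ∧ ∃ g : F'.obj c' ⟶ F.obj c,
    f ≫ g = F.map (𝟙 c) ∧ g ≫ f = F'.map (𝟙 c')

end Semifunctor

open Semifunctor

/-- A semiadjunction `F ⊣ₛ G`: seminatural unit and counit satisfying the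
semitriangular identities `G(ε) ∘ ηG = G(Id)` and `εF ∘ F(η) = F(Id)`. -/
structure Semiadjunction {C : Type u₁} {D : Type u₂} [Category.{v₁} C] [Category.{v₂} D]
    (F : Semifunctor C D) (G : Semifunctor D C) where
  unit : ∀ X : C, X ⟶ G.obj (F.obj X)
  counit : ∀ Y : D, F.obj (G.obj Y) ⟶ Y
  unit_natural : ∀ ⦃X Y : C⦄ (f : X ⟶ Y), f ≫ unit Y = unit X ≫ G.map (F.map f)
  counit_natural : ∀ ⦃X Y : D⦄ (g : X ⟶ Y), F.map (G.map g) ≫ counit Y = counit X ≫ g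
  right_triangle : ∀ Y : D, unit (G.obj Y) ≫ G.map (counit Y) = G.map (𝟙 Y)
  left_triangle : ∀ X : C, F.map (unit X) ≫ counit (F.obj X) = F.map (𝟙 X)

/-- The canonical semifunctor `E^e` attached to an idempotent seminatural
transformation `e : Id_C → Id_C`: identity on objects, `f ↦ f ∘ e_X = e_Y ∘ f`. -/
def canonicalSemifunctor {C : Type u₁} [Category.{v₁} C] (e : ∀ X : C, X ⟶ X)
    (hnat : ∀ ⦃X Y : C⦄ (f : X ⟶ Y), f ≫ e Y = e X ≫ f)
    (hid : ∀ X : C, e X ≫ e X = e X) : Semifunctor C C where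
  obj X := X
  map {X Y} f := e X ≫ f
  map_comp {X Y Z} f g := by
    show e X ≫ f ≫ g = (e X ≫ f) ≫ e Y ≫ g
    calc e X ≫ f ≫ g = (e X ≫ e X) ≫ f ≫ g := by rw [hid]
      _ = e X ≫ (e X ≫ f) ≫ g := by simp only [Category.assoc]
      _ = e X ≫ (f ≫ e Y) ≫ g := by rw [← hnat f]
      _ = (e X ≫ f) ≫ e Y ≫ g := by simp only [Category.assoc]


/-! A faithful semifunctor reflects equalities, so any choice of semifull preimages
`P f` is automatically natural: both sides of the naturality square have the same image
under `F`. Such a `P` is moreover a retraction of `F`, since `F (P (F f)) = F f`. -/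

namespace Semifunctor

variable {C : Type u₁} {D : Type u₂} [Category.{v₁} C] [Category.{v₂} D]
  (F : Semifunctor C D)

@[simp]
lemma map_id_comp {X Y : C} (f : X ⟶ Y) : F.map (𝟙 X) ≫ F.map f = F.map f := by
  rw [← F.map_comp, Category.id_comp]

@[simp]
lemma map_comp_id {X Y : C} (f : X ⟶ Y) : F.map f ≫ F.map (𝟙 Y) = F.map f := by
  rw [← F.map_comp, Category.comp_id]

variable {F}

lemma Faithful.isHomNatural {P : ∀ X Y : C, (F.obj X ⟶ F.obj Y) → (X ⟶ Y)}
    (hF : F.Faithful)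
    (hP : ∀ (X Y : C) (f : F.obj X ⟶ F.obj Y),
      F.map (P X Y f) = F.map (𝟙 X) ≫ f ≫ F.map (𝟙 Y)) :
    F.IsHomNatural P := by
  intro X Y Z T h k l
  apply hF
  calc F.map (P X T (F.map h ≫ k ≫ F.map l))
      = F.map (𝟙 X) ≫ (F.map h ≫ k ≫ F.map l) ≫ F.map (𝟙 T) := hP _ _ _
    _ = F.map h ≫ k ≫ F.map l := by
        rw [Category.assoc, Category.assoc, map_comp_id, ← Category.assoc, map_id_comp]
    _ = (F.map h ≫ F.map (𝟙 Y)) ≫ k ≫ F.map (𝟙 Z) ≫ F.map l := by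
        rw [map_comp_id, map_id_comp]
    _ = F.map h ≫ (F.map (𝟙 Y) ≫ k ≫ F.map (𝟙 Z)) ≫ F.map l := by
        simp only [Category.assoc]
    _ = F.map (h ≫ P Y Z k ≫ l) := by rw [← hP, F.map_comp, F.map_comp]

lemma SemifullyFaithful.naturallySemifull (hF : F.SemifullyFaithful) :
    F.NaturallySemifull := by
  choose P hP using fun (X Y : C) (f : F.obj X ⟶ F.obj Y) => hF.2 f
  exact ⟨P, hF.1.isHomNatural hP, hP⟩

lemma NaturallySemifull.separable_of_faithful (hN : F.NaturallySemifull)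
    (hF : F.Faithful) : F.Separable := by
  obtain ⟨P, hnat, hP⟩ := hN
  exact ⟨P, hnat, fun X Y f => hF _ _ (by rw [hP, map_comp_id, map_id_comp])⟩

lemma Separable.faithful (hS : F.Separable) : F.Faithful := by
  obtain ⟨P, -, hret⟩ := hS
  intro X Y f g h
  rw [← hret X Y f, ← hret X Y g, h]

lemma NaturallySemifull.semifull (hN : F.NaturallySemifull) : F.Semifull := by
  obtain ⟨P, -, hP⟩ := hN
  exact fun X Y f => ⟨P X Y f, hP X Y f⟩

end Semifunctor

/-- A semifunctor is semifully faithful iff it is separable and naturally semifull. -/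
theorem semifullyFaithful_iff_separable_and_naturallySemifull
    {C : Type u₁} {D : Type u₂} [Category.{v₁} C] [Category.{v₂} D]
    (F : Semifunctor C D) :
    F.SemifullyFaithful ↔ F.Separable ∧ F.NaturallySemifull :=
  ⟨fun hF => ⟨hF.naturallySemifull.separable_of_faithful hF.1, hF.naturallySemifull⟩,
    fun ⟨hS, hN⟩ => ⟨hS.faithful, hN.semifull⟩⟩
end

section
/- (Rafael-type Theorem for semiseparable semifunctors) Let F ⊣ₛ G : D → C be a semiadjunction of semifunctors with unit η and counit ε. Then: (1) F is semiseparable if and only if there exists a natural transformation ν : GF → Id_C satisfying η_X ∘ ν_X ∘ η_X = η_X for all X (equivalently, F(ν_X) ∘ F(η_X) = F(Id_X) for all X); (2) G is semiseparable if and only if there exists a natural transformation γ : Id_D → FG satisfying ε_D ∘ γ_D ∘ ε_D = ε_D for all D (equivalently, G(ε_D) ∘ G(γ_D) = G(Id_D) for all D). -/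
/-!
Given a natural `P : Hom_D(F-,F-) → Hom_C(-,-)`, the components `ν_X = P(ε_{FX})` form a
natural `ν : GF → Id_C` with `ν_X ∘ η_X = P(F(Id_X))`, so `F(ν_X) ∘ F(η_X) = F(Id_X)` is exactly
semiseparability applied to `Id_X`. Conversely, `P(k) = ν_Y ∘ G(k) ∘ η_X` is natural, and
`P(F(f)) = f ∘ ν_X ∘ η_X` is sent by `F` to `F(f)`. The two forms of the condition on `ν`
are exchanged by the triangle identity `ε_{FX} ∘ F(η_X) = F(Id_X)` and the naturality of `η`.
The statements about `G` are dual, with `γ_D = Q(η_{GD})` and `Q(k) = ε_Y ∘ F(k) ∘ γ_X`.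
-/

open CategoryTheory

universe v₁ v₂ v₃ v₄ u₁ u₂ u₃ u₄

open Semifunctor

namespace Semifunctor

variable {C : Type u₁} {D : Type u₂} [Category.{v₁} C] [Category.{v₂} D]

@[simp]
lemma map_id_comp_map (F : Semifunctor C D) {X Y : C} (f : X ⟶ Y) :
    F.map (𝟙 X) ≫ F.map f = F.map f := by
  rw [← F.map_comp, Category.id_comp]

@[simp]
lemma map_comp_map_id (F : Semifunctor C D) {X Y : C} (f : X ⟶ Y) :
    F.map f ≫ F.map (𝟙 Y) = F.map f := by
  rw [← F.map_comp, Category.comp_id]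

namespace IsHomNatural

variable {F : Semifunctor C D} {P : ∀ X Y : C, (F.obj X ⟶ F.obj Y) → (X ⟶ Y)}

lemma comp_apply (hP : F.IsHomNatural P) {X Y Z : C} (h : X ⟶ Y) (k : F.obj Y ⟶ F.obj Z) :
    h ≫ P Y Z k = P X Z (F.map h ≫ k ≫ F.map (𝟙 Z)) := by
  rw [hP, Category.comp_id]

lemma apply_comp (hP : F.IsHomNatural P) {X Y Z : C} (k : F.obj X ⟶ F.obj Y) (l : Y ⟶ Z) :
    P X Y k ≫ l = P X Z (F.map (𝟙 X) ≫ k ≫ F.map l) := by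
  rw [hP, Category.id_comp]

lemma apply_map_id_comp_comp_map_id (hP : F.IsHomNatural P) {X Y : C} (k : F.obj X ⟶ F.obj Y) :
    P X Y (F.map (𝟙 X) ≫ k ≫ F.map (𝟙 Y)) = P X Y k := by
  rw [hP, Category.id_comp, Category.comp_id]

end IsHomNatural

end Semifunctor

namespace Semiadjunction

variable {C : Type u₁} {D : Type u₂} [Category.{v₁} C] [Category.{v₂} D]
  {F : Semifunctor C D} {G : Semifunctor D C} (adj : Semiadjunction F G)

lemma unit_comp_comp_unit_iff {X : C} (ν : G.obj (F.obj X) ⟶ X) :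
    adj.unit X ≫ ν ≫ adj.unit X = adj.unit X ↔
      F.map (adj.unit X) ≫ F.map ν = F.map (𝟙 X) := by
  constructor
  · intro h
    calc F.map (adj.unit X) ≫ F.map ν
        = F.map (adj.unit X ≫ ν) ≫ F.map (adj.unit X) ≫ adj.counit (F.obj X) := by
          rw [adj.left_triangle, F.map_comp_map_id, F.map_comp]
      _ = F.map (adj.unit X) ≫ adj.counit (F.obj X) := by
          rw [← Category.assoc, ← F.map_comp, Category.assoc, h]
      _ = F.map (𝟙 X) := adj.left_triangle X
  · intro h
    calc adj.unit X ≫ ν ≫ adj.unit X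
        = (adj.unit X ≫ adj.unit (G.obj (F.obj X))) ≫ G.map (F.map ν) := by
          rw [adj.unit_natural ν, Category.assoc]
      _ = adj.unit X ≫ G.map (F.map (adj.unit X) ≫ F.map ν) := by
          rw [adj.unit_natural (adj.unit X), Category.assoc, G.map_comp]
      _ = adj.unit X := by
          rw [h, ← adj.unit_natural (𝟙 X), Category.id_comp]

lemma counit_comp_comp_counit_iff {Y : D} (γ : Y ⟶ F.obj (G.obj Y)) :
    adj.counit Y ≫ γ ≫ adj.counit Y = adj.counit Y ↔
      G.map γ ≫ G.map (adj.counit Y) = G.map (𝟙 Y) := by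
  constructor
  · intro h
    calc G.map γ ≫ G.map (adj.counit Y)
        = (adj.unit (G.obj Y) ≫ G.map (adj.counit Y)) ≫ G.map (γ ≫ adj.counit Y) := by
          rw [adj.right_triangle, G.map_id_comp_map, G.map_comp]
      _ = adj.unit (G.obj Y) ≫ G.map (adj.counit Y) := by
          rw [Category.assoc, ← G.map_comp, h]
      _ = G.map (𝟙 Y) := adj.right_triangle Y
  · intro h
    calc adj.counit Y ≫ γ ≫ adj.counit Y
        = F.map (G.map γ) ≫ adj.counit (F.obj (G.obj Y)) ≫ adj.counit Y := by
          rw [← Category.assoc, ← adj.counit_natural γ, Category.assoc]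
      _ = F.map (G.map γ ≫ G.map (adj.counit Y)) ≫ adj.counit Y := by
          rw [← adj.counit_natural (adj.counit Y), ← Category.assoc, ← F.map_comp]
      _ = adj.counit Y := by
          rw [h, adj.counit_natural (𝟙 Y), Category.comp_id]

def leftHomInv (ν : ∀ X : C, G.obj (F.obj X) ⟶ X) (X Y : C) (k : F.obj X ⟶ F.obj Y) :
    X ⟶ Y :=
  adj.unit X ≫ G.map k ≫ ν Y

lemma isHomNatural_leftHomInv {ν : ∀ X : C, G.obj (F.obj X) ⟶ X}
    (hν : ∀ ⦃X Y : C⦄ (f : X ⟶ Y), G.map (F.map f) ≫ ν Y = ν X ≫ f) :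
    F.IsHomNatural (adj.leftHomInv ν) := by
  intro X Y Z T h k l
  simp only [leftHomInv, G.map_comp, Category.assoc, hν l]
  rw [← Category.assoc (adj.unit X), ← adj.unit_natural h, Category.assoc]

lemma map_leftHomInv_map {ν : ∀ X : C, G.obj (F.obj X) ⟶ X}
    (hν : ∀ ⦃X Y : C⦄ (f : X ⟶ Y), G.map (F.map f) ≫ ν Y = ν X ≫ f)
    (hνη : ∀ X : C, F.map (adj.unit X) ≫ F.map (ν X) = F.map (𝟙 X)) {X Y : C} (f : X ⟶ Y) :
    F.map (adj.leftHomInv ν X Y (F.map f)) = F.map f := by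
  rw [leftHomInv, hν f, F.map_comp, F.map_comp, ← Category.assoc, hνη, F.map_id_comp_map]

def rightHomInv (γ : ∀ Y : D, Y ⟶ F.obj (G.obj Y)) (X Y : D) (k : G.obj X ⟶ G.obj Y) :
    X ⟶ Y :=
  γ X ≫ F.map k ≫ adj.counit Y

lemma isHomNatural_rightHomInv {γ : ∀ Y : D, Y ⟶ F.obj (G.obj Y)}
    (hγ : ∀ ⦃X Y : D⦄ (g : X ⟶ Y), g ≫ γ Y = γ X ≫ F.map (G.map g)) :
    G.IsHomNatural (adj.rightHomInv γ) := by
  intro X Y Z T h k l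
  simp only [rightHomInv, F.map_comp, Category.assoc, adj.counit_natural l]
  rw [← Category.assoc (γ X), ← hγ h, Category.assoc]

lemma map_rightHomInv_map {γ : ∀ Y : D, Y ⟶ F.obj (G.obj Y)}
    (hγ : ∀ ⦃X Y : D⦄ (g : X ⟶ Y), g ≫ γ Y = γ X ≫ F.map (G.map g))
    (hγε : ∀ Y : D, G.map (γ Y) ≫ G.map (adj.counit Y) = G.map (𝟙 Y)) {X Y : D} (g : X ⟶ Y) :
    G.map (adj.rightHomInv γ X Y (G.map g)) = G.map g := by
  rw [rightHomInv, ← Category.assoc, ← hγ g, G.map_comp, G.map_comp, Category.assoc, hγε,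
    G.map_comp_map_id]

def unitInv (P : ∀ X Y : C, (F.obj X ⟶ F.obj Y) → (X ⟶ Y)) (X : C) : G.obj (F.obj X) ⟶ X :=
  P _ X (adj.counit (F.obj X))

lemma unitInv_natural {P : ∀ X Y : C, (F.obj X ⟶ F.obj Y) → (X ⟶ Y)} (hP : F.IsHomNatural P)
    ⦃X Y : C⦄ (f : X ⟶ Y) : G.map (F.map f) ≫ adj.unitInv P Y = adj.unitInv P X ≫ f := by
  have lhs : G.map (F.map f) ≫ adj.unitInv P Y = P _ Y (adj.counit (F.obj X) ≫ F.map f) := by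
    rw [unitInv, hP.comp_apply, ← Category.assoc, adj.counit_natural, Category.assoc,
      F.map_comp_map_id]
  have rhs : adj.unitInv P X ≫ f = P _ Y (adj.counit (F.obj X) ≫ F.map f) := by
    rw [unitInv, hP.apply_comp,
      ← hP.apply_map_id_comp_comp_map_id (adj.counit (F.obj X) ≫ F.map f), Category.assoc,
      F.map_comp_map_id]
  rw [lhs, rhs]

lemma unit_comp_unitInv {P : ∀ X Y : C, (F.obj X ⟶ F.obj Y) → (X ⟶ Y)} (hP : F.IsHomNatural P)
    (X : C) : adj.unit X ≫ adj.unitInv P X = P X X (F.map (𝟙 X)) := by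
  rw [unitInv, hP.comp_apply, ← Category.assoc, adj.left_triangle, F.map_comp_map_id]

def counitInv (Q : ∀ X Y : D, (G.obj X ⟶ G.obj Y) → (X ⟶ Y)) (Y : D) : Y ⟶ F.obj (G.obj Y) :=
  Q Y _ (adj.unit (G.obj Y))

lemma counitInv_natural {Q : ∀ X Y : D, (G.obj X ⟶ G.obj Y) → (X ⟶ Y)} (hQ : G.IsHomNatural Q)
    ⦃X Y : D⦄ (g : X ⟶ Y) : g ≫ adj.counitInv Q Y = adj.counitInv Q X ≫ F.map (G.map g) := by
  have lhs : g ≫ adj.counitInv Q Y = Q X _ (G.map g ≫ adj.unit (G.obj Y)) := by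
    rw [counitInv, hQ.comp_apply,
      ← hQ.apply_map_id_comp_comp_map_id (G.map g ≫ adj.unit (G.obj Y))]
    simp only [Category.assoc]
    rw [← Category.assoc (G.map (𝟙 X)), G.map_id_comp_map]
  have rhs : adj.counitInv Q X ≫ F.map (G.map g) = Q X _ (G.map g ≫ adj.unit (G.obj Y)) := by
    rw [counitInv, hQ.apply_comp, ← adj.unit_natural, ← Category.assoc, G.map_id_comp_map]
  rw [lhs, rhs]

lemma counitInv_comp_counit {Q : ∀ X Y : D, (G.obj X ⟶ G.obj Y) → (X ⟶ Y)}
    (hQ : G.IsHomNatural Q) (Y : D) : adj.counitInv Q Y ≫ adj.counit Y = Q Y Y (G.map (𝟙 Y)) := by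
  rw [counitInv, hQ.apply_comp, adj.right_triangle, G.map_id_comp_map]

theorem semiseparable_left_iff : F.Semiseparable ↔ ∃ ν : ∀ X : C, G.obj (F.obj X) ⟶ X,
    (∀ ⦃X Y : C⦄ (f : X ⟶ Y), G.map (F.map f) ≫ ν Y = ν X ≫ f) ∧
      ∀ X : C, F.map (adj.unit X) ≫ F.map (ν X) = F.map (𝟙 X) := by
  constructor
  · rintro ⟨P, hP, hPF⟩
    refine ⟨adj.unitInv P, adj.unitInv_natural hP, fun X => ?_⟩
    rw [← F.map_comp, adj.unit_comp_unitInv hP, hPF]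
  · rintro ⟨ν, hν, hνη⟩
    exact ⟨adj.leftHomInv ν, adj.isHomNatural_leftHomInv hν,
      fun _ _ => adj.map_leftHomInv_map hν hνη⟩

theorem semiseparable_right_iff : G.Semiseparable ↔ ∃ γ : ∀ Y : D, Y ⟶ F.obj (G.obj Y),
    (∀ ⦃X Y : D⦄ (g : X ⟶ Y), g ≫ γ Y = γ X ≫ F.map (G.map g)) ∧
      ∀ Y : D, G.map (γ Y) ≫ G.map (adj.counit Y) = G.map (𝟙 Y) := by
  constructor
  · rintro ⟨Q, hQ, hQG⟩
    refine ⟨adj.counitInv Q, adj.counitInv_natural hQ, fun Y => ?_⟩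
    rw [← G.map_comp, adj.counitInv_comp_counit hQ, hQG]
  · rintro ⟨γ, hγ, hγε⟩
    exact ⟨adj.rightHomInv γ, adj.isHomNatural_rightHomInv hγ,
      fun _ _ => adj.map_rightHomInv_map hγ hγε⟩

end Semiadjunction

/-- Rafael-type Theorem for semiseparable semifunctors: `F` is semiseparable iff there
is a natural `ν : GF → Id_C` with `η ∘ ν ∘ η = η` (equivalently `F(ν) ∘ F(η) = F(Id)`),
and `G` is semiseparable iff there is a natural `γ : Id_D → FG` with
`ε ∘ γ ∘ ε = ε` (equivalently `G(ε) ∘ G(γ) = G(Id)`). -/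
theorem rafael_semiseparable_semifunctors
    {C : Type u₁} {D : Type u₂} [Category.{v₁} C] [Category.{v₂} D]
    {F : Semifunctor C D} {G : Semifunctor D C} (adj : Semiadjunction F G) :
    (F.Semiseparable ↔ ∃ ν : ∀ X : C, G.obj (F.obj X) ⟶ X,
      (∀ ⦃X Y : C⦄ (f : X ⟶ Y), G.map (F.map f) ≫ ν Y = ν X ≫ f) ∧
      (∀ X : C, adj.unit X ≫ ν X ≫ adj.unit X = adj.unit X)) ∧
    (∀ ν : ∀ X : C, G.obj (F.obj X) ⟶ X,
      (∀ ⦃X Y : C⦄ (f : X ⟶ Y), G.map (F.map f) ≫ ν Y = ν X ≫ f) →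
      ((∀ X : C, adj.unit X ≫ ν X ≫ adj.unit X = adj.unit X) ↔
       (∀ X : C, F.map (adj.unit X) ≫ F.map (ν X) = F.map (𝟙 X)))) ∧
    (G.Semiseparable ↔ ∃ γ : ∀ Y : D, Y ⟶ F.obj (G.obj Y),
      (∀ ⦃X Y : D⦄ (g : X ⟶ Y), g ≫ γ Y = γ X ≫ F.map (G.map g)) ∧
      (∀ Y : D, adj.counit Y ≫ γ Y ≫ adj.counit Y = adj.counit Y)) ∧
    (∀ γ : ∀ Y : D, Y ⟶ F.obj (G.obj Y),
      (∀ ⦃X Y : D⦄ (g : X ⟶ Y), g ≫ γ Y = γ X ≫ F.map (G.map g)) →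
      ((∀ Y : D, adj.counit Y ≫ γ Y ≫ adj.counit Y = adj.counit Y) ↔
       (∀ Y : D, G.map (γ Y) ≫ G.map (adj.counit Y) = G.map (𝟙 Y)))) := by
  refine ⟨?_, fun ν _ => forall_congr' fun X => adj.unit_comp_comp_unit_iff (ν X), ?_,
    fun γ _ => forall_congr' fun Y => adj.counit_comp_comp_counit_iff (γ Y)⟩
  · simpa only [adj.unit_comp_comp_unit_iff] using adj.semiseparable_left_iff
  · simpa only [adj.counit_comp_comp_counit_iff] using adj.semiseparable_right_iff
end
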